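/- arXiv:2510.17240 — 8 statements merged into one kernel-verified Lean document; each statement's English description precedes it below -/
import Mathlib

section
/- Let λ₁, λ₂ be positive real numbers with λ₁² + λ₂² = 1, let R₁ ∈ (0, π/2], and let R ∈ (0, π) satisfy cos R = 1 − λ₁²(1 − cos R₁). Then tan(R/2) > λ₁² · tan(R₁/2). -/
open Real

lemma aux_cc (lam s c1 c2 : ℝ) (hlam : 0 < lam) (hlam1 : lam ^ 2 < 1) (hs : 0 < s)
    (hshalf : 2 * s ^ 2 ≤ 1) (hc1 : 0 < c1) (hc2 : 0 < c2)
    (h1 : c1 ^ 2 = 1 - lam ^ 2 * s ^ 2) (h2 : c2 ^ 2 = 1 - s ^ 2) : lam * c1 < c2 := by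
  have hgap : lam ^ 2 * c1 ^ 2 < c2 ^ 2 := by
    nlinarith [mul_pos (mul_pos hs hs) (by linarith : (0:ℝ) < 1 - lam ^ 2)]
  nlinarith [mul_pos (mul_pos hlam hc1) hc2, sq_nonneg (lam * c1 - c2)]

theorem stmt_3 (lam₁ lam₂ R₁ R : ℝ)
    (hlam₁ : 0 < lam₁) (hlam₂ : 0 < lam₂) (hsum : lam₁ ^ 2 + lam₂ ^ 2 = 1)
    (hR₁ : R₁ ∈ Set.Ioc 0 (π / 2)) (hR : R ∈ Set.Ioo 0 π)
    (hcos : Real.cos R = 1 - lam₁ ^ 2 * (1 - Real.cos R₁)) :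
    Real.tan (R / 2) > lam₁ ^ 2 * Real.tan (R₁ / 2) := by
  obtain ⟨hR₁0, hR₁2⟩ := hR₁
  obtain ⟨hR0, hRpi⟩ := hR
  have hpi := Real.pi_pos
  -- half angles
  have hs1 : 0 < Real.sin (R / 2) := Real.sin_pos_of_pos_of_lt_pi (by linarith) (by linarith)
  have hc1 : 0 < Real.cos (R / 2) :=
    Real.cos_pos_of_mem_Ioo ⟨by linarith, by linarith⟩
  have hs2 : 0 < Real.sin (R₁ / 2) := Real.sin_pos_of_pos_of_lt_pi (by linarith) (by linarith)
  have hc2 : 0 < Real.cos (R₁ / 2) :=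
    Real.cos_pos_of_mem_Ioo ⟨by linarith, by linarith⟩
  -- cos from half-angle
  have hcR : Real.cos R = 1 - 2 * Real.sin (R / 2) ^ 2 := by
    have := Real.cos_two_mul (R / 2)
    have hpy := Real.sin_sq_add_cos_sq (R / 2)
    have : Real.cos (2 * (R / 2)) = 2 * Real.cos (R / 2) ^ 2 - 1 := this
    rw [show 2 * (R / 2) = R by ring] at this
    linarith
  have hcR₁ : Real.cos R₁ = 1 - 2 * Real.sin (R₁ / 2) ^ 2 := by
    have := Real.cos_two_mul (R₁ / 2)
    have hpy := Real.sin_sq_add_cos_sq (R₁ / 2)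
    rw [show 2 * (R₁ / 2) = R₁ by ring] at this
    linarith
  have hkey : Real.sin (R / 2) ^ 2 = lam₁ ^ 2 * Real.sin (R₁ / 2) ^ 2 := by
    rw [hcR, hcR₁] at hcos; nlinarith [hcos]
  have hs1eq : Real.sin (R / 2) = lam₁ * Real.sin (R₁ / 2) := by
    rw [← Real.sqrt_sq hs1.le, hkey,
      show lam₁ ^ 2 * Real.sin (R₁ / 2) ^ 2 = (lam₁ * Real.sin (R₁ / 2)) ^ 2 from by ring,
      Real.sqrt_sq (mul_pos hlam₁ hs2).le]
  -- sin(R₁/2) ≤ cos(R₁/2)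
  have hsc : Real.sin (R₁ / 2) ≤ Real.cos (R₁ / 2) := by
    rw [← Real.sin_pi_div_two_sub]
    apply Real.sin_le_sin_of_le_of_le_pi_div_two (by linarith) (by linarith) (by linarith)
  have hpy1 := Real.sin_sq_add_cos_sq (R / 2)
  have hpy2 := Real.sin_sq_add_cos_sq (R₁ / 2)
  have hlam1lt : lam₁ ^ 2 < 1 := by nlinarith
  have hcc : lam₁ * Real.cos (R / 2) < Real.cos (R₁ / 2) :=
    aux_cc lam₁ (Real.sin (R₁ / 2)) (Real.cos (R / 2)) (Real.cos (R₁ / 2))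
      hlam₁ hlam1lt hs2 (by nlinarith [hsc, hs2]) hc1 hc2
      (by linarith [hpy1, hkey]) (by linarith [hpy2])
  rw [gt_iff_lt, Real.tan_eq_sin_div_cos, Real.tan_eq_sin_div_cos,
    mul_div_assoc' , div_lt_div_iff₀ hc2 hc1]
  calc lam₁ ^ 2 * Real.sin (R₁ / 2) * Real.cos (R / 2)
      < lam₁ * Real.sin (R₁ / 2) * Real.cos (R₁ / 2) := by nlinarith [mul_pos hlam₁ hs2]
    _ = Real.sin (R / 2) * Real.cos (R₁ / 2) := by rw [hs1eq]
end

section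
/- Let k₁, k₂ be positive real numbers, k = k₁ + k₂, let R₁ ∈ (0, π/2], and let R ∈ [0, π] satisfy cos R = 1 − (k₁/k)(1 − cos R₁). Then k² · sin²R ≤ k₁(2k₂ + k₁) · sin²R₁, i.e. sin R ≤ (√(k₁(2k₂+k₁))/k) · sin R₁. -/
open Real

theorem stmt_4 (k₁ k₂ R₁ R : ℝ) (hk₁ : 0 < k₁) (hk₂ : 0 < k₂)
    (hR₁ : R₁ ∈ Set.Ioc 0 (π / 2)) (hR : R ∈ Set.Icc 0 π)
    (hcos : Real.cos R = 1 - (k₁ / (k₁ + k₂)) * (1 - Real.cos R₁)) :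
    (k₁ + k₂) ^ 2 * Real.sin R ^ 2 ≤ k₁ * (2 * k₂ + k₁) * Real.sin R₁ ^ 2 ∧
      Real.sin R ≤ (Real.sqrt (k₁ * (2 * k₂ + k₁)) / (k₁ + k₂)) * Real.sin R₁ := by
  have hk : (0:ℝ) < k₁ + k₂ := by linarith
  have hc1 : 0 ≤ Real.cos R₁ := Real.cos_nonneg_of_mem_Icc ⟨by linarith [hR₁.1, Real.pi_pos], hR₁.2⟩
  have hc2 : Real.cos R₁ ≤ 1 := Real.cos_le_one _
  have hs : Real.sin R ^ 2 = 1 - Real.cos R ^ 2 := by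
    have := Real.sin_sq_add_cos_sq R; linarith
  have hs1 : Real.sin R₁ ^ 2 = 1 - Real.cos R₁ ^ 2 := by
    have := Real.sin_sq_add_cos_sq R₁; linarith
  have hkcos : (k₁ + k₂) * Real.cos R = k₂ + k₁ * Real.cos R₁ := by
    field_simp at hcos
    nlinarith [hcos]
  have h1 : (k₁ + k₂) ^ 2 * Real.sin R ^ 2 ≤ k₁ * (2 * k₂ + k₁) * Real.sin R₁ ^ 2 := by
    have hkcos2 : ((k₁ + k₂) * Real.cos R) ^ 2 = (k₂ + k₁ * Real.cos R₁) ^ 2 := by rw [hkcos]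
    have key : (k₁ + k₂) ^ 2 * Real.sin R ^ 2
        = 2 * k₁ * k₂ * (1 - Real.cos R₁) + k₁ ^ 2 * Real.sin R₁ ^ 2 := by
      linear_combination (k₁ + k₂) ^ 2 * hs - k₁ ^ 2 * hs1 - hkcos2
    have h2 : 2 * k₁ * k₂ * Real.sin R₁ ^ 2 = 2 * k₁ * k₂ * (1 - Real.cos R₁ ^ 2) := by
      rw [hs1]
    nlinarith [key, h2, mul_nonneg (mul_nonneg (mul_pos hk₁ hk₂).le hc1) (sub_nonneg.2 hc2)]
  refine ⟨h1, ?_⟩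
  have hsR : 0 ≤ Real.sin R := Real.sin_nonneg_of_nonneg_of_le_pi hR.1 hR.2
  have hsR₁ : 0 ≤ Real.sin R₁ := Real.sin_nonneg_of_nonneg_of_le_pi hR₁.1.le
    (by linarith [hR₁.2, Real.pi_pos])
  have hrhs : 0 ≤ Real.sqrt (k₁ * (2 * k₂ + k₁)) / (k₁ + k₂) * Real.sin R₁ :=
    mul_nonneg (div_nonneg (Real.sqrt_nonneg _) hk.le) hsR₁
  have hsq : Real.sin R ^ 2 ≤ (Real.sqrt (k₁ * (2 * k₂ + k₁)) / (k₁ + k₂) * Real.sin R₁) ^ 2 := by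
    have hnn : (0:ℝ) ≤ k₁ * (2 * k₂ + k₁) := by nlinarith
    have : Real.sqrt (k₁ * (2 * k₂ + k₁)) ^ 2 = k₁ * (2 * k₂ + k₁) := Real.sq_sqrt hnn
    rw [mul_pow, div_pow, this]
    rw [div_mul_eq_mul_div, le_div_iff₀ (by positivity)]
    nlinarith [h1]
  have := Real.sqrt_le_sqrt hsq
  rwa [Real.sqrt_sq hsR, Real.sqrt_sq hrhs] at this
end

section
/- Let k₁, k₂ be positive real numbers, k = k₁ + k₂, let R₁ ∈ (0, π/2], and let R ∈ (0, π) satisfy cos R = 1 − (k₁/k)(1 − cos R₁). Then tan(R/2) ≥ √(k₁/(k₁ + 2k₂)) · tan(R₁/2). -/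
open Real

theorem stmt_5 (k₁ k₂ R₁ R : ℝ) (hk₁ : 0 < k₁) (hk₂ : 0 < k₂)
    (hR₁ : R₁ ∈ Set.Ioc 0 (π / 2)) (hR : R ∈ Set.Ioo 0 π)
    (hcos : Real.cos R = 1 - (k₁ / (k₁ + k₂)) * (1 - Real.cos R₁)) :
    Real.tan (R / 2) ≥ Real.sqrt (k₁ / (k₁ + 2 * k₂)) * Real.tan (R₁ / 2) := by
  have hπ := Real.pi_pos
  obtain ⟨hR₁0, hR₁2⟩ := hR₁
  obtain ⟨hR0, hRπ⟩ := hR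
  have hk : 0 < k₁ + k₂ := by linarith
  have hk2 : 0 < k₁ + 2 * k₂ := by linarith
  set c := Real.cos R₁ with hc
  have hc0 : 0 ≤ c := Real.cos_nonneg_of_mem_Icc ⟨by linarith, hR₁2⟩
  have hc1 : c < 1 := by
    have := Real.cos_lt_cos_of_nonneg_of_le_pi (le_refl 0) (by linarith) hR₁0
    simpa using this
  have ht : k₁ / (k₁ + k₂) < 1 := by
    rw [div_lt_one hk]; linarith
  have ht0 : 0 < k₁ / (k₁ + k₂) := div_pos hk₁ hk
  have hcosR : 0 < Real.cos R := by nlinarith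
  -- positivity of tangents
  have ha : 0 < Real.tan (R / 2) :=
    Real.tan_pos_of_pos_of_lt_pi_div_two (by linarith) (by linarith)
  have hb : 0 < Real.tan (R₁ / 2) :=
    Real.tan_pos_of_pos_of_lt_pi_div_two (by linarith) (by linarith)
  set q := k₁ / (k₁ + 2 * k₂) with hq
  have hq0 : 0 ≤ q := le_of_lt (div_pos hk₁ hk2)
  -- squares of half-angle tangents
  have tansq : ∀ x : ℝ, Real.tan (x / 2) ^ 2
      = (1 / 2 - Real.cos x / 2) / (1 / 2 + Real.cos x / 2) := by
    intro x
    have hcs : Real.cos (x / 2) ^ 2 = 1 / 2 + Real.cos x / 2 := by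
      have := Real.cos_sq (x / 2)
      rwa [show 2 * (x / 2) = x by ring] at this
    have hss : Real.sin (x / 2) ^ 2 = 1 / 2 - Real.cos x / 2 := by
      have := Real.sin_sq_add_cos_sq (x / 2)
      linarith
    rw [Real.tan_eq_sin_div_cos, div_pow, hss, hcs]
  have key : (Real.sqrt q * Real.tan (R₁ / 2)) ^ 2 ≤ Real.tan (R / 2) ^ 2 := by
    rw [mul_pow, Real.sq_sqrt hq0, tansq, tansq, hcos]
    have hd1 : (0 : ℝ) < 1 / 2 + c / 2 := by linarith
    have hd2 : (0 : ℝ) < 1 / 2 + (1 - k₁ / (k₁ + k₂) * (1 - c)) / 2 := by nlinarith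
    rw [← hc, mul_div_assoc', div_le_div_iff₀ hd1 hd2, hq]
    have key2 : k₁ / (k₁ + 2 * k₂) * (2 - k₁ / (k₁ + k₂) * (1 - c))
        ≤ k₁ / (k₁ + k₂) * (1 + c) := by
      rw [← sub_nonneg]
      have hrw : k₁ / (k₁ + k₂) * (1 + c) - k₁ / (k₁ + 2 * k₂) * (2 - k₁ / (k₁ + k₂) * (1 - c))
          = (2 * k₁ * k₂ * c) / ((k₁ + k₂) * (k₁ + 2 * k₂)) := by
        field_simp
        ring
      rw [hrw]
      positivity
    nlinarith [mul_le_mul_of_nonneg_left key2 (show (0:ℝ) ≤ (1 - c)/4 by linarith)]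
  calc Real.sqrt q * Real.tan (R₁ / 2)
      = Real.sqrt ((Real.sqrt q * Real.tan (R₁ / 2)) ^ 2) :=
        (Real.sqrt_sq (by positivity)).symm
    _ ≤ Real.sqrt (Real.tan (R / 2) ^ 2) := Real.sqrt_le_sqrt key
    _ = Real.tan (R / 2) := Real.sqrt_sq ha.le
end

section
/- Let k₁, k₂ be positive integers such that either k₂ ≥ 4, or (k₂ ≥ 3 and k₁ ≥ 2). Set k = k₁ + k₂. Let R₁ ∈ (0, π/2] and let R ∈ (0, π) satisfy cos R = 1 − (k₁/k)(1 − cos R₁). Then tan(R/2) ≥ ((k₁ + 1)/(k₁ + k₂ + 1)) · tan(R₁/2). -/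
open Real

lemma aux_key (a b t : ℝ) (ha : 1 ≤ a) (hb : 1 ≤ b) (hab : 2*a+2 ≤ a*b)
    (ht0 : 0 < t) (ht1 : t ≤ 1) :
    ((a+1)/(a+b+1))^2 * (t/(2-t)) ≤ (a*t)/(2*(a+b) - a*t) := by
  have hab0 : (0:ℝ) < a + b := by linarith
  have hd1 : (0:ℝ) < 2 - t := by linarith
  have hat : a * t ≤ a + b := by nlinarith
  have hd2 : (0:ℝ) < 2*(a+b) - a*t := by nlinarith
  rw [div_pow, div_mul_div_comm]
  rw [div_le_div_iff₀ (by positivity) hd2]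
  have h1 : 0 ≤ t * (b * (a*b - 2*a - 2)) := by
    apply mul_nonneg ht0.le
    apply mul_nonneg (by linarith)
    linarith
  have h2 : 0 ≤ t * ((1 - t) * (a * ((a+b+1)^2 - (a+1)^2))) := by
    apply mul_nonneg ht0.le
    apply mul_nonneg (by linarith)
    apply mul_nonneg (by linarith)
    nlinarith
  nlinarith [h1, h2]

theorem stmt_7 (k₁ k₂ : ℕ) (hk₁ : 0 < k₁) (hk₂ : 0 < k₂)
    (h : 4 ≤ k₂ ∨ (3 ≤ k₂ ∧ 2 ≤ k₁)) (R₁ R : ℝ)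
    (hR₁ : R₁ ∈ Set.Ioc 0 (π / 2)) (hR : R ∈ Set.Ioo 0 π)
    (hcos : Real.cos R = 1 - ((k₁ : ℝ) / ((k₁ : ℝ) + k₂)) * (1 - Real.cos R₁)) :
    Real.tan (R / 2) ≥ (((k₁ : ℝ) + 1) / ((k₁ : ℝ) + k₂ + 1)) * Real.tan (R₁ / 2) := by
  obtain ⟨hR₁0, hR₁2⟩ := hR₁
  obtain ⟨hR0, hRπ⟩ := hR
  have hπ := Real.pi_pos
  have ha : (1:ℝ) ≤ (k₁:ℝ) := by exact_mod_cast hk₁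
  have hb : (1:ℝ) ≤ (k₂:ℝ) := by exact_mod_cast hk₂
  have hab : 2*(k₁:ℝ)+2 ≤ (k₁:ℝ)*(k₂:ℝ) := by
    rcases h with h4 | ⟨h3, h2⟩
    · have h4' : (4:ℝ) ≤ (k₂:ℝ) := by exact_mod_cast h4
      nlinarith [mul_le_mul_of_nonneg_left h4' (by linarith : (0:ℝ) ≤ (k₁:ℝ))]
    · have h3' : (3:ℝ) ≤ (k₂:ℝ) := by exact_mod_cast h3
      have h2' : (2:ℝ) ≤ (k₁:ℝ) := by exact_mod_cast h2
      nlinarith [mul_le_mul_of_nonneg_left h3' (by linarith : (0:ℝ) ≤ (k₁:ℝ))]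
  have hab0 : (0:ℝ) < (k₁:ℝ) + (k₂:ℝ) := by linarith
  -- cosine bounds for R₁
  have hc₁0 : 0 ≤ Real.cos R₁ := Real.cos_nonneg_of_mem_Icc ⟨by linarith, hR₁2⟩
  have hc₁1 : Real.cos R₁ < 1 := by
    refine lt_of_le_of_ne (Real.cos_le_one R₁) ?_
    intro hc
    have := (Real.cos_eq_one_iff_of_lt_of_lt (x := R₁) (by linarith) (by linarith)).1 hc
    linarith
  set t : ℝ := 1 - Real.cos R₁ with htdef
  have ht0 : 0 < t := by simp [htdef]; linarith
  have ht1 : t ≤ 1 := by simp [htdef]; linarith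
  -- half angle positivity
  have hcx : 0 < Real.cos (R/2) := Real.cos_pos_of_mem_Ioo ⟨by linarith, by linarith⟩
  have hcy : 0 < Real.cos (R₁/2) := Real.cos_pos_of_mem_Ioo ⟨by linarith, by linarith⟩
  have htx : 0 < Real.tan (R/2) :=
    Real.tan_pos_of_pos_of_lt_pi_div_two (by linarith) (by linarith)
  have hty : 0 < Real.tan (R₁/2) :=
    Real.tan_pos_of_pos_of_lt_pi_div_two (by linarith) (by linarith)
  -- square identities
  have sq_id : ∀ x : ℝ, 0 < Real.cos (x/2) →
      Real.tan (x/2)^2 = (1 - Real.cos x)/(1 + Real.cos x) := by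
    intro x hx
    have h2m : Real.cos x = 2 * Real.cos (x/2)^2 - 1 := by
      have := Real.cos_two_mul (x/2)
      rw [show 2*(x/2) = x by ring] at this
      exact this
    have hs : Real.sin (x/2)^2 = 1 - Real.cos (x/2)^2 := by
      have := Real.sin_sq_add_cos_sq (x/2); linarith
    rw [Real.tan_eq_sin_div_cos, div_pow, hs, h2m]
    have hx2 : Real.cos (x/2)^2 ≠ 0 := by positivity
    field_simp
    ring
  have e1 := sq_id R hcx
  have e2 := sq_id R₁ hcy
  -- denominators
  have hd2 : (0:ℝ) < 2*((k₁:ℝ)+(k₂:ℝ)) - (k₁:ℝ)*t := by nlinarith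
  have key := aux_key (k₁:ℝ) (k₂:ℝ) t ha hb hab ht0 ht1
  -- rewrite the RHS of key as (1-cos R)/(1+cos R)
  have ecR : (1 - Real.cos R)/(1 + Real.cos R) = ((k₁:ℝ)*t)/(2*((k₁:ℝ)+(k₂:ℝ)) - (k₁:ℝ)*t) := by
    rw [hcos]
    rw [show (1 - (1 - (k₁:ℝ)/((k₁:ℝ)+(k₂:ℝ)) * t)) = (k₁:ℝ)/((k₁:ℝ)+(k₂:ℝ)) * t by ring]
    rw [show (1 + (1 - (k₁:ℝ)/((k₁:ℝ)+(k₂:ℝ)) * t)) = 2 - (k₁:ℝ)/((k₁:ℝ)+(k₂:ℝ)) * t by ring]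
    have hlam : (k₁:ℝ)/((k₁:ℝ)+(k₂:ℝ)) ≤ 1 := (div_le_one hab0).mpr (by linarith)
    have hlam0 : 0 ≤ (k₁:ℝ)/((k₁:ℝ)+(k₂:ℝ)) := by positivity
    have hlt : (k₁:ℝ)/((k₁:ℝ)+(k₂:ℝ)) * t ≤ 1 := by nlinarith
    have hne1 : (2 - (k₁:ℝ)/((k₁:ℝ)+(k₂:ℝ)) * t) ≠ 0 := by
      intro hz; linarith
    rw [div_eq_div_iff hne1 hd2.ne']
    field_simp
  have ec1 : (1 - Real.cos R₁)/(1 + Real.cos R₁) = t/(2-t) := by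
    rw [htdef]; ring_nf
  have hsq : ((((k₁:ℝ)+1)/((k₁:ℝ)+(k₂:ℝ)+1)) * Real.tan (R₁/2))^2 ≤ Real.tan (R/2)^2 := by
    rw [mul_pow, e1, e2, ec1, ecR]
    exact key
  have hbnn : 0 ≤ (((k₁:ℝ)+1)/((k₁:ℝ)+(k₂:ℝ)+1)) * Real.tan (R₁/2) := by positivity
  exact (pow_le_pow_iff_left₀ hbnn htx.le (two_ne_zero)).mp hsq
end

section
/- Let λ₁, λ₂ be positive real numbers with λ₁² + λ₂² = 1 and let R₁ ∈ (0, π]. Set c = λ₁² cos R₁ + λ₂². Then c ∈ (−1, 1), so R := arccos(c) ∈ (0, π) and sin R > 0; moreover sin²R = λ₁²(1 − cos R₁)(2 − λ₁²(1 − cos R₁)), and the numbers a₀ := λ₁λ₂(cos R₁ − 1)/sin R and a₁ := λ₁ sin R₁ / sin R satisfy a₀² + a₁² = 1. -/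
/-!
Write `c = λ₁² cos R₁ + λ₂²` as the convex combination of `cos R₁ ∈ [-1, 1)` and `1` with
weights `λ₁², λ₂² > 0`; this puts `c` strictly inside `(-1, 1)`. Then `sin² (arccos c) = 1 - c²`
factors as `(1 - c)(1 + c)` with `1 - c = λ₁²(1 - cos R₁)`, and the same factorisation,
together with `sin² R₁ = 1 - cos² R₁`, shows that the squared numerators of `a₀` and `a₁`
add up to `1 - c²`.
-/

open Real Set

lemma cos_lt_one_of_mem_Ioc {x : ℝ} (hx : x ∈ Ioc 0 π) : cos x < 1 := by
  simpa using cos_lt_cos_of_nonneg_of_le_pi le_rfl hx.2 hx.1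

lemma convex_comb_one_mem_Ioo {s t x : ℝ} (hs : 0 < s) (ht : 0 < t) (hst : s + t = 1)
    (hx : x ∈ Ico (-1) 1) : s * x + t ∈ Ioo (-1) 1 := by
  obtain ⟨hx₁, hx₂⟩ := hx
  constructor <;> nlinarith

lemma one_sub_sq_convex_comb_one {s t x : ℝ} (hst : s + t = 1) :
    1 - (s * x + t) ^ 2 = s * (1 - x) * (2 - s * (1 - x)) := by
  obtain rfl : t = 1 - s := by linarith
  ring

lemma arccos_mem_Ioo {x : ℝ} (hx : x ∈ Ioo (-1) 1) : arccos x ∈ Ioo 0 π :=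
  ⟨arccos_pos.2 hx.2, arccos_lt_pi.2 hx.1⟩

lemma sin_arccos_sq {x : ℝ} (hx₁ : -1 ≤ x) (hx₂ : x ≤ 1) : sin (arccos x) ^ 2 = 1 - x ^ 2 := by
  rw [sin_arccos, sq_sqrt (by nlinarith)]

lemma sq_mul_cos_sub_one_add_sq_mul_sin {s t R : ℝ} (hst : s ^ 2 + t ^ 2 = 1) :
    (s * t * (cos R - 1)) ^ 2 + (s * sin R) ^ 2 = 1 - (s ^ 2 * cos R + t ^ 2) ^ 2 := by
  linear_combination s ^ 2 * sin_sq_add_cos_sq R + (t ^ 2 + s ^ 2 * cos R ^ 2 + 1) * hst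

lemma div_sq_add_div_sq_eq_one {a b d : ℝ} (hd : d ≠ 0) (h : a ^ 2 + b ^ 2 = d ^ 2) :
    (a / d) ^ 2 + (b / d) ^ 2 = 1 := by
  rw [div_pow, div_pow, ← add_div, h, div_self (pow_ne_zero 2 hd)]

theorem stmt_8 (lam₁ lam₂ R₁ : ℝ)
    (hlam₁ : 0 < lam₁) (hlam₂ : 0 < lam₂) (hsum : lam₁ ^ 2 + lam₂ ^ 2 = 1)
    (hR₁ : R₁ ∈ Set.Ioc 0 π) :
    lam₁ ^ 2 * Real.cos R₁ + lam₂ ^ 2 ∈ Set.Ioo (-1 : ℝ) 1 ∧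
    Real.arccos (lam₁ ^ 2 * Real.cos R₁ + lam₂ ^ 2) ∈ Set.Ioo 0 π ∧
    0 < Real.sin (Real.arccos (lam₁ ^ 2 * Real.cos R₁ + lam₂ ^ 2)) ∧
    Real.sin (Real.arccos (lam₁ ^ 2 * Real.cos R₁ + lam₂ ^ 2)) ^ 2 =
      lam₁ ^ 2 * (1 - Real.cos R₁) * (2 - lam₁ ^ 2 * (1 - Real.cos R₁)) ∧
    (lam₁ * lam₂ * (Real.cos R₁ - 1) /
        Real.sin (Real.arccos (lam₁ ^ 2 * Real.cos R₁ + lam₂ ^ 2))) ^ 2 +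
      (lam₁ * Real.sin R₁ /
        Real.sin (Real.arccos (lam₁ ^ 2 * Real.cos R₁ + lam₂ ^ 2))) ^ 2 = 1 := by
  set c := lam₁ ^ 2 * cos R₁ + lam₂ ^ 2
  have hc : c ∈ Ioo (-1) 1 := convex_comb_one_mem_Ioo (by positivity) (by positivity) hsum
    ⟨neg_one_le_cos R₁, cos_lt_one_of_mem_Ioc hR₁⟩
  have hR : arccos c ∈ Ioo 0 π := arccos_mem_Ioo hc
  have hsin_pos : 0 < sin (arccos c) := sin_pos_of_pos_of_lt_pi hR.1 hR.2
  have hsin_sq : sin (arccos c) ^ 2 = 1 - c ^ 2 := sin_arccos_sq hc.1.le hc.2.le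
  refine ⟨hc, hR, hsin_pos, hsin_sq.trans (one_sub_sq_convex_comb_one hsum), ?_⟩
  exact div_sq_add_div_sq_eq_one hsin_pos.ne'
    ((sq_mul_cos_sub_one_add_sq_mul_sin hsum).trans hsin_sq.symm)
end

section
/- Let k₁, k₂ be positive integers, k = k₁ + k₂, and λᵢ = √(kᵢ/k) for i = 1, 2. Let S be a symmetric traceless real k₁×k₁ matrix and T a symmetric traceless real k₂×k₂ matrix. For (a₀, a₁, a₂) ∈ ℝ³, let M(a₀,a₁,a₂) be the k×k block-diagonal matrix with blocks (a₁/λ₁)S − a₀(λ₂/λ₁)I_{k₁} and (a₂/λ₂)T + a₀(λ₁/λ₂)I_{k₂}. Then the supremum of the squared Frobenius norm ‖M(a₀,a₁,a₂)‖² over all (a₀,a₁,a₂) with a₀² + a₁² + a₂² = 1 equals k · max{‖S‖²/k₁, ‖T‖²/k₂, 1}, where ‖S‖, ‖T‖ denote Frobenius norms. -/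
open Matrix

noncomputable def frobSq {n : Type*} [Fintype n] (M : Matrix n n ℝ) : ℝ :=
  ∑ i, ∑ j, (M i j) ^ 2

lemma frobSq_blocks {m n : ℕ} (B : Matrix (Fin m) (Fin m) ℝ) (C : Matrix (Fin n) (Fin n) ℝ) :
    frobSq (Matrix.fromBlocks B 0 0 C) = frobSq B + frobSq C := by
  unfold frobSq
  rw [Fintype.sum_sum_type]
  simp [Fintype.sum_sum_type]

lemma frobSq_shift {n : ℕ} (c d : ℝ) (A : Matrix (Fin n) (Fin n) ℝ) (h : A.trace = 0) :
    frobSq (c • A + d • (1 : Matrix (Fin n) (Fin n) ℝ)) = c ^ 2 * frobSq A + d ^ 2 * n := by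
  have key : ∀ i j : Fin n, ((c • A + d • (1 : Matrix (Fin n) (Fin n) ℝ)) i j) ^ 2
      = c ^ 2 * (A i j) ^ 2 + 2 * c * d * (if i = j then A i j else 0)
        + d ^ 2 * (if i = j then (1 : ℝ) else 0) := by
    intro i j
    by_cases hij : i = j <;> simp [Matrix.add_apply, Matrix.one_apply, hij] <;> ring
  unfold frobSq
  simp only [key, Finset.sum_add_distrib, ← Finset.mul_sum]
  have t1 : ∑ i : Fin n, ∑ j : Fin n, (if i = j then A i j else 0) = 0 := by
    simpa [Matrix.trace, Matrix.diag] using h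
  have t2 : ∑ i : Fin n, ∑ j : Fin n, (if i = j then (1 : ℝ) else 0) = n := by
    simp
  rw [t1, t2]; ring

theorem stmt_10 (k₁ k₂ : ℕ) (hk₁ : 0 < k₁) (hk₂ : 0 < k₂)
    (S : Matrix (Fin k₁) (Fin k₁) ℝ) (T : Matrix (Fin k₂) (Fin k₂) ℝ)
    (hS : S.IsSymm) (hStr : S.trace = 0) (hT : T.IsSymm) (hTtr : T.trace = 0) :
    sSup {x : ℝ | ∃ a₀ a₁ a₂ : ℝ, a₀ ^ 2 + a₁ ^ 2 + a₂ ^ 2 = 1 ∧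
        x = frobSq (Matrix.fromBlocks
          ((a₁ / Real.sqrt ((k₁ : ℝ) / ((k₁ : ℝ) + k₂))) • S -
            (a₀ * Real.sqrt ((k₂ : ℝ) / ((k₁ : ℝ) + k₂)) /
              Real.sqrt ((k₁ : ℝ) / ((k₁ : ℝ) + k₂))) •
              (1 : Matrix (Fin k₁) (Fin k₁) ℝ))
          0 0
          ((a₂ / Real.sqrt ((k₂ : ℝ) / ((k₁ : ℝ) + k₂))) • T +
            (a₀ * Real.sqrt ((k₁ : ℝ) / ((k₁ : ℝ) + k₂)) /
              Real.sqrt ((k₂ : ℝ) / ((k₁ : ℝ) + k₂))) •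
              (1 : Matrix (Fin k₂) (Fin k₂) ℝ)))} =
      ((k₁ : ℝ) + k₂) * max (max (frobSq S / (k₁ : ℝ)) (frobSq T / (k₂ : ℝ))) 1 := by
  have hk1' : (0:ℝ) < k₁ := by exact_mod_cast hk₁
  have hk2' : (0:ℝ) < k₂ := by exact_mod_cast hk₂
  set K : ℝ := (k₁ : ℝ) + k₂ with hKdef
  have hK : 0 < K := by positivity
  set l1 : ℝ := Real.sqrt ((k₁ : ℝ) / K) with hl1def
  set l2 : ℝ := Real.sqrt ((k₂ : ℝ) / K) with hl2def
  have hl1 : l1 ^ 2 = (k₁ : ℝ) / K := Real.sq_sqrt (by positivity)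
  have hl2 : l2 ^ 2 = (k₂ : ℝ) / K := Real.sq_sqrt (by positivity)
  set A : ℝ := frobSq S / k₁ with hAdef
  set B : ℝ := frobSq T / k₂ with hBdef
  have hval : ∀ a₀ a₁ a₂ : ℝ, frobSq (Matrix.fromBlocks
          ((a₁ / l1) • S - (a₀ * l2 / l1) • (1 : Matrix (Fin k₁) (Fin k₁) ℝ))
          0 0
          ((a₂ / l2) • T + (a₀ * l1 / l2) • (1 : Matrix (Fin k₂) (Fin k₂) ℝ)))
        = K * (a₀ ^ 2 + a₁ ^ 2 * A + a₂ ^ 2 * B) := by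
    intro a₀ a₁ a₂
    rw [sub_eq_add_neg, ← neg_smul, frobSq_blocks, frobSq_shift _ _ _ hStr,
      frobSq_shift _ _ _ hTtr, hAdef, hBdef]
    simp only [neg_sq, div_pow, mul_pow, hl1, hl2]
    field_simp
    ring
  set M : ℝ := max (max A B) 1 with hMdef
  have hmemval : ∀ a₀ a₁ a₂ : ℝ, a₀ ^ 2 + a₁ ^ 2 + a₂ ^ 2 = 1 →
      K * (a₀ ^ 2 + a₁ ^ 2 * A + a₂ ^ 2 * B) ∈ {x : ℝ | ∃ a₀ a₁ a₂ : ℝ,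
        a₀ ^ 2 + a₁ ^ 2 + a₂ ^ 2 = 1 ∧
        x = frobSq (Matrix.fromBlocks
          ((a₁ / l1) • S - (a₀ * l2 / l1) • (1 : Matrix (Fin k₁) (Fin k₁) ℝ))
          0 0
          ((a₂ / l2) • T + (a₀ * l1 / l2) • (1 : Matrix (Fin k₂) (Fin k₂) ℝ)))} := by
    intro a₀ a₁ a₂ h
    exact ⟨a₀, a₁, a₂, h, (hval a₀ a₁ a₂).symm⟩
  apply IsGreatest.csSup_eq
  constructor
  · -- membership
    by_cases h1 : max A B ≤ 1
    · have hM1 : M = 1 := max_eq_right h1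
      have := hmemval 1 0 0 (by norm_num)
      simpa [hM1] using this
    · push_neg at h1
      have hM1 : M = max A B := max_eq_left h1.le
      rcases le_total A B with hAB | hAB
      · have : M = B := by rw [hM1, max_eq_right hAB]
        have h2 := hmemval 0 0 1 (by norm_num)
        simpa [this] using h2
      · have : M = A := by rw [hM1, max_eq_left hAB]
        have h2 := hmemval 0 1 0 (by norm_num)
        simpa [this] using h2
  · -- upper bound
    rintro x ⟨a₀, a₁, a₂, hsum, rfl⟩
    rw [hval]
    have hAM : A ≤ M := (le_max_left A B).trans (le_max_left _ _)
    have hBM : B ≤ M := (le_max_right A B).trans (le_max_left _ _)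
    have h1M : (1:ℝ) ≤ M := le_max_right _ _
    have inner : a₀ ^ 2 + a₁ ^ 2 * A + a₂ ^ 2 * B ≤ M := by
      nlinarith [mul_nonneg (sq_nonneg a₀) (sub_nonneg.2 h1M),
        mul_nonneg (sq_nonneg a₁) (sub_nonneg.2 hAM),
        mul_nonneg (sq_nonneg a₂) (sub_nonneg.2 hBM)]
    exact mul_le_mul_of_nonneg_left inner hK.le
end

section
/- Let r, m be integers with 2 ≤ r < m, let α > 0 and T > 0 be real numbers, and for γ, t ∈ ℝ and an integer n ≥ 2 set F(γ, t, n) = (1 − γt√((n−1)/n))·(1 + γt/√(n(n−1)))^{n−1}. Suppose g : ℝ → ℝ is differentiable with g(0) = 1, g(T) = 0, and for all t ∈ [0, T]: g(t) ≥ 0, g'(t) ≤ 0, and (g(t) − t·g'(t)/r)² + (g'(t)/r)² ≤ F(α, t, r)². Define β = α·(m/r)·√((r−1)m/(r(m−1))) and h(s) = g(ms/r). Then h(0) = 1, h(rT/m) = 0, and for all s ∈ [0, rT/m]: (h(s) − s·h'(s)/m)² + (h'(s)/m)² ≤ F(β, s, m)². -/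
open Real

/-- Lawlor's comparison function `F(γ, t, n)`. -/
noncomputable def lawlorF (γ t : ℝ) (n : ℕ) : ℝ :=
  (1 - γ * t * Real.sqrt (((n : ℝ) - 1) / (n : ℝ))) *
    (1 + γ * t / Real.sqrt ((n : ℝ) * ((n : ℝ) - 1))) ^ (n - 1)

private lemma sq_eq_aux {a b : ℝ} (ha : 0 ≤ a) (hb : 0 ≤ b) (h : a ^ 2 = b ^ 2) : a = b := by
  nlinarith [sq_nonneg (a - b)]

private lemma rpow_bernoulli_mono {c a b : ℝ} (hc : 0 ≤ c) (ha : 1 ≤ a) (hab : a ≤ b) :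
    (1 + c / a) ^ (a : ℝ) ≤ (1 + c / b) ^ (b : ℝ) := by
  have ha0 : (0 : ℝ) < a := lt_of_lt_of_le one_pos ha
  have hb0 : (0 : ℝ) < b := ha0.trans_le hab
  have h1 : (1 : ℝ) + c / a ≤ (1 + c / b) ^ (b / a : ℝ) := by
    have hber := one_add_mul_self_le_rpow_one_add
      (s := c / b) (le_trans (by norm_num) (div_nonneg hc hb0.le))
      (p := b / a) (by rw [le_div_iff₀ ha0]; linarith)
    have he : (b / a) * (c / b) = c / a := by field_simp
    rw [he] at hber
    exact hber
  calc (1 + c / a) ^ (a : ℝ) ≤ ((1 + c / b) ^ (b / a : ℝ)) ^ (a : ℝ) :=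
        Real.rpow_le_rpow (by positivity) h1 ha0.le
    _ = (1 + c / b) ^ (b : ℝ) := by
        rw [← Real.rpow_mul (by positivity)]
        congr 1
        field_simp

set_option maxHeartbeats 1000000 in
theorem stmt_14 (r m : ℕ) (hr : 2 ≤ r) (hrm : r < m)
    (α T : ℝ) (hα : 0 < α) (hT : 0 < T)
    (g : ℝ → ℝ) (hg : Differentiable ℝ g) (hg0 : g 0 = 1) (hgT : g T = 0)
    (hcal : ∀ t ∈ Set.Icc (0 : ℝ) T,
      0 ≤ g t ∧ deriv g t ≤ 0 ∧
        (g t - t * deriv g t / (r : ℝ)) ^ 2 + (deriv g t / (r : ℝ)) ^ 2 ≤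
          (lawlorF α t r) ^ 2) :
    (fun s : ℝ => g ((m : ℝ) * s / (r : ℝ))) 0 = 1 ∧
    (fun s : ℝ => g ((m : ℝ) * s / (r : ℝ))) ((r : ℝ) * T / (m : ℝ)) = 0 ∧
    ∀ s ∈ Set.Icc (0 : ℝ) ((r : ℝ) * T / (m : ℝ)),
      ((fun s : ℝ => g ((m : ℝ) * s / (r : ℝ))) s -
          s * deriv (fun s : ℝ => g ((m : ℝ) * s / (r : ℝ))) s / (m : ℝ)) ^ 2 +
        (deriv (fun s : ℝ => g ((m : ℝ) * s / (r : ℝ))) s / (m : ℝ)) ^ 2 ≤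
        (lawlorF
          (α * ((m : ℝ) / (r : ℝ)) *
            Real.sqrt (((r : ℝ) - 1) * (m : ℝ) / ((r : ℝ) * ((m : ℝ) - 1))))
          s m) ^ 2 := by
  have hr0 : (0 : ℝ) < r := by exact_mod_cast (by omega : 0 < r)
  have hm0 : (0 : ℝ) < m := by exact_mod_cast (by omega : 0 < m)
  have hrm' : (r : ℝ) < m := by exact_mod_cast hrm
  have hr1 : (1 : ℝ) ≤ (r : ℝ) - 1 := by
    have : (2 : ℝ) ≤ r := by exact_mod_cast hr
    linarith
  have hm1 : (1 : ℝ) ≤ (m : ℝ) - 1 := by linarith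
  set β : ℝ := α * ((m : ℝ) / (r : ℝ)) *
      Real.sqrt (((r : ℝ) - 1) * (m : ℝ) / ((r : ℝ) * ((m : ℝ) - 1))) with hβ
  have hderiv : ∀ s : ℝ, deriv (fun s : ℝ => g ((m : ℝ) * s / (r : ℝ))) s =
      deriv g ((m : ℝ) * s / (r : ℝ)) * ((m : ℝ) / (r : ℝ)) := by
    intro s
    have h1 : HasDerivAt (fun s : ℝ => (m : ℝ) * s / (r : ℝ)) ((m : ℝ) / (r : ℝ)) s := by
      have heq : (fun s : ℝ => (m : ℝ) * s / (r : ℝ)) = fun s : ℝ => ((m : ℝ) / (r : ℝ)) * s := by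
        funext x; ring
      rw [heq]
      simpa using (hasDerivAt_id s).const_mul ((m : ℝ) / (r : ℝ))
    have h2 : HasDerivAt (fun s : ℝ => g ((m : ℝ) * s / (r : ℝ)))
        (deriv g ((m : ℝ) * s / (r : ℝ)) * ((m : ℝ) / (r : ℝ))) s :=
      (hg _).hasDerivAt.comp s h1
    exact h2.deriv
  refine ⟨by simp [hg0], ?_, ?_⟩
  · have : (m : ℝ) * ((r : ℝ) * T / (m : ℝ)) / (r : ℝ) = T := by
      field_simp
    simp only [this, hgT]
  intro s hs
  obtain ⟨hs0, hsU⟩ := hs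
  set t : ℝ := (m : ℝ) * s / (r : ℝ) with htdef
  have ht0 : 0 ≤ t := by positivity
  have htT : t ≤ T := by
    have hsm : s * (m : ℝ) ≤ (r : ℝ) * T := (le_div_iff₀ hm0).mp hsU
    rw [htdef, div_le_iff₀ hr0]
    nlinarith
  obtain ⟨hG, hG', hcal'⟩ := hcal t ⟨ht0, htT⟩
  simp only [hderiv]
  set G : ℝ := g t
  set G' : ℝ := deriv g t
  -- rewrite derivative pieces
  have hA : G' * ((m : ℝ) / (r : ℝ)) / (m : ℝ) = G' / (r : ℝ) := by
    field_simp
  have hB : G - s * (G' * ((m : ℝ) / (r : ℝ))) / (m : ℝ) = G - (s / (r : ℝ)) * G' := by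
    field_simp
  rw [hA, hB]
  -- Step 1: compare with the inequality at t
  have hstep1 : (G - (s / (r : ℝ)) * G') ^ 2 ≤ (G - t * G' / (r : ℝ)) ^ 2 := by
    have h1 : 0 ≤ G - (s / (r : ℝ)) * G' := by
      have : (s / (r : ℝ)) * G' ≤ 0 :=
        mul_nonpos_of_nonneg_of_nonpos (by positivity) hG'
      linarith
    have h2 : G - (s / (r : ℝ)) * G' ≤ G - t * G' / (r : ℝ) := by
      have hsG : s * G' ≤ 0 := mul_nonpos_of_nonneg_of_nonpos hs0 hG'
      have key : t * G' ≤ s * G' := by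
        rw [htdef, div_mul_eq_mul_div, div_le_iff₀ hr0]
        nlinarith [mul_nonneg (sub_nonneg.mpr hrm'.le) (neg_nonneg.mpr hsG)]
      have h4 : t * G' / (r : ℝ) ≤ s * G' / (r : ℝ) := by gcongr
      have e : s / (r : ℝ) * G' = s * G' / (r : ℝ) := by ring
      linarith
    exact pow_le_pow_left₀ h1 h2 2
  -- Step 2: compare lawlorF values
  set c : ℝ := α * t * Real.sqrt (((r : ℝ) - 1) / (r : ℝ)) with hc
  have hc0 : 0 ≤ c := by positivity
  have hsqr : Real.sqrt (((r : ℝ) - 1) / (r : ℝ)) ^ 2 = ((r : ℝ) - 1) / (r : ℝ) :=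
    Real.sq_sqrt (by positivity)
  have hsqβ : Real.sqrt (((r : ℝ) - 1) * (m : ℝ) / ((r : ℝ) * ((m : ℝ) - 1))) ^ 2 =
      ((r : ℝ) - 1) * (m : ℝ) / ((r : ℝ) * ((m : ℝ) - 1)) :=
    Real.sq_sqrt (by positivity)
  -- E2 : α * t / √(r(r-1)) = c / (r-1)
  have hE2 : α * t / Real.sqrt ((r : ℝ) * ((r : ℝ) - 1)) = c / ((r : ℝ) - 1) := by
    apply sq_eq_aux (by positivity) (by positivity)
    rw [div_pow, div_pow, Real.sq_sqrt (by positivity), hc, mul_pow, mul_pow, hsqr]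
    field_simp
  -- E3 : β * s * √((m-1)/m) = c
  have hE3 : β * s * Real.sqrt (((m : ℝ) - 1) / (m : ℝ)) = c := by
    apply sq_eq_aux (by positivity) hc0
    rw [mul_pow, mul_pow, Real.sq_sqrt (by positivity : (0:ℝ) ≤ ((m : ℝ) - 1) / (m : ℝ)),
      hβ, mul_pow, mul_pow, hsqβ, hc, mul_pow, mul_pow, hsqr, div_pow, htdef]
    field_simp
  -- E4 : β * s / √(m(m-1)) = c / (m-1)
  have hE4 : β * s / Real.sqrt ((m : ℝ) * ((m : ℝ) - 1)) = c / ((m : ℝ) - 1) := by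
    apply sq_eq_aux (by positivity) (by positivity)
    rw [div_pow, div_pow, Real.sq_sqrt (by positivity : (0:ℝ) ≤ (m : ℝ) * ((m : ℝ) - 1)),
      hβ, mul_pow, mul_pow, hsqβ, hc, mul_pow, mul_pow, hsqr, htdef]
    field_simp
  -- the pow comparison
  have hcastr : ((r - 1 : ℕ) : ℝ) = (r : ℝ) - 1 := by
    push_cast [Nat.cast_sub (by omega : 1 ≤ r)]; ring
  have hcastm : ((m - 1 : ℕ) : ℝ) = (m : ℝ) - 1 := by
    push_cast [Nat.cast_sub (by omega : 1 ≤ m)]; ring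
  have hpow : (1 + c / ((r : ℝ) - 1)) ^ (r - 1) ≤ (1 + c / ((m : ℝ) - 1)) ^ (m - 1) := by
    have := rpow_bernoulli_mono hc0 hr1 (by linarith : (r : ℝ) - 1 ≤ (m : ℝ) - 1)
    calc (1 + c / ((r : ℝ) - 1)) ^ (r - 1)
        = (1 + c / ((r : ℝ) - 1)) ^ (((r - 1 : ℕ) : ℝ)) := by
          rw [Real.rpow_natCast]
      _ = (1 + c / ((r : ℝ) - 1)) ^ (((r : ℝ) - 1)) := by rw [hcastr]
      _ ≤ (1 + c / ((m : ℝ) - 1)) ^ (((m : ℝ) - 1)) := this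
      _ = (1 + c / ((m : ℝ) - 1)) ^ (((m - 1 : ℕ) : ℝ)) := by rw [hcastm]
      _ = (1 + c / ((m : ℝ) - 1)) ^ (m - 1) := by rw [Real.rpow_natCast]
  have honer : (1 : ℝ) ≤ (1 + c / ((r : ℝ) - 1)) ^ (r - 1) := by
    apply one_le_pow₀
    have : 0 ≤ c / ((r : ℝ) - 1) := div_nonneg hc0 (by linarith)
    linarith
  have hFr : lawlorF α t r = (1 - c) * (1 + c / ((r : ℝ) - 1)) ^ (r - 1) := by
    rw [lawlorF, hE2, ← hc]
  have hFm : lawlorF β s m = (1 - c) * (1 + c / ((m : ℝ) - 1)) ^ (m - 1) := by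
    rw [lawlorF, hE4, hE3]
  have hFF : (lawlorF α t r) ^ 2 ≤ (lawlorF β s m) ^ 2 := by
    rw [hFr, hFm, mul_pow, mul_pow]
    exact mul_le_mul_of_nonneg_left
      (pow_le_pow_left₀ (by linarith) hpow 2) (sq_nonneg _)
  have hG'sq : (G' / (r : ℝ)) ^ 2 = (deriv g t / (r : ℝ)) ^ 2 := rfl
  calc (G - s / (r : ℝ) * G') ^ 2 + (G' / (r : ℝ)) ^ 2
      ≤ (G - t * G' / (r : ℝ)) ^ 2 + (G' / (r : ℝ)) ^ 2 := by linarith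
    _ ≤ (lawlorF α t r) ^ 2 := hcal'
    _ ≤ (lawlorF β s m) ^ 2 := hFF
end

section
/- Let k₁, k₂ be positive integers with either k₁ ≥ 2, or (k₁ = 1 and k₂ ≥ 4). Then √((k₁ + k₂ + 1)/(k₁ + 1)) · (1 + 1/(k₁ + k₂)) / (1 + 1/k₁) > 1. Equivalently, √((k₁+k₂+1)·k₁ / ((k₁+k₂)·(k₁+1))) · (√(k₁+k₂) + 1/√(k₁+k₂)) / (√k₁ + 1/√k₁) > 1. -/
theorem stmt_16 (k₁ k₂ : ℕ) (hk₁ : 0 < k₁) (hk₂ : 0 < k₂)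
    (h : 2 ≤ k₁ ∨ (k₁ = 1 ∧ 4 ≤ k₂)) :
    Real.sqrt (((k₁ : ℝ) + k₂ + 1) / ((k₁ : ℝ) + 1)) * (1 + 1 / ((k₁ : ℝ) + k₂)) /
        (1 + 1 / (k₁ : ℝ)) > 1 ∧
    Real.sqrt (((k₁ : ℝ) + k₂ + 1) * k₁ / (((k₁ : ℝ) + k₂) * ((k₁ : ℝ) + 1))) *
        (Real.sqrt ((k₁ : ℝ) + k₂) + 1 / Real.sqrt ((k₁ : ℝ) + k₂)) /
        (Real.sqrt (k₁ : ℝ) + 1 / Real.sqrt (k₁ : ℝ)) > 1 := by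
  have hx1 : (1 : ℝ) ≤ (k₁ : ℝ) := by exact_mod_cast hk₁
  have hd1 : (1 : ℝ) ≤ (k₂ : ℝ) := by exact_mod_cast hk₂
  have h' : (2 : ℝ) ≤ (k₁ : ℝ) ∨ ((k₁ : ℝ) = 1 ∧ (4 : ℝ) ≤ (k₂ : ℝ)) := by
    rcases h with h2 | ⟨h1, h4⟩
    · exact Or.inl (by exact_mod_cast h2)
    · exact Or.inr ⟨by exact_mod_cast h1, by exact_mod_cast h4⟩
  set x : ℝ := (k₁ : ℝ) with hx
  set d : ℝ := (k₂ : ℝ) with hdd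
  set y : ℝ := x + d with hy
  have hx0 : 0 < x := by linarith
  have hd0 : 0 < d := by linarith
  have hy0 : 0 < y := by rw [hy]; linarith
  have hxne : x ≠ 0 := ne_of_gt hx0
  have hyne : y ≠ 0 := ne_of_gt hy0
  -- key polynomial inequality
  have key : (x + 1) ^ 3 * y ^ 2 < (y + 1) ^ 3 * x ^ 2 := by
    rw [hy]
    rcases h' with hx2 | ⟨hx1', hd4⟩
    · have h1 : 0 ≤ x * d * ((x + 1) ^ 2 * (x - 2)) := by
        have : (0:ℝ) ≤ x - 2 := by linarith
        positivity
      have h2 : 0 < x * d ^ 2 * (2 * x ^ 2 - 3) := by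
        have : (0:ℝ) < 2 * x ^ 2 - 3 := by nlinarith
        positivity
      have h3 : 0 < d ^ 2 * (x ^ 2 * d - 1) := by
        have : (0:ℝ) < x ^ 2 * d - 1 := by nlinarith
        positivity
      nlinarith [h1, h2, h3]
    · rw [hx1']
      have h1 : 0 ≤ d * ((d - 4) * (d + 2)) := by
        have : (0:ℝ) ≤ d - 4 := by linarith
        positivity
      nlinarith [h1]
  -- common value of the square
  have hQ : 1 < (y + 1) ^ 3 * x ^ 2 / ((x + 1) ^ 3 * y ^ 2) :=
    (one_lt_div (by positivity)).2 key
  constructor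
  · -- first inequality
    have hA : (0:ℝ) ≤ (y + 1) / (x + 1) := by positivity
    set E : ℝ := Real.sqrt ((y + 1) / (x + 1)) * (1 + 1 / y) / (1 + 1 / x) with hE
    have hEpos : 0 < E := by
      have hs : 0 < Real.sqrt ((y + 1) / (x + 1)) := Real.sqrt_pos.2 (by positivity)
      have h1 : 0 < 1 + 1 / y := by positivity
      have h2 : 0 < 1 + 1 / x := by positivity
      positivity
    have hE2 : 1 < E ^ 2 := by
      have heq : E ^ 2 = (y + 1) ^ 3 * x ^ 2 / ((x + 1) ^ 3 * y ^ 2) := by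
        rw [hE, div_pow, mul_pow, Real.sq_sqrt hA]
        field_simp
      rw [heq]; exact hQ
    nlinarith [hEpos, hE2]
  · have hA : (0:ℝ) ≤ (y + 1) * x / (y * (x + 1)) := by positivity
    set sx : ℝ := Real.sqrt x with hsx
    set sy : ℝ := Real.sqrt y with hsy
    have hsx0 : 0 < sx := Real.sqrt_pos.2 hx0
    have hsy0 : 0 < sy := Real.sqrt_pos.2 hy0
    have hsx2 : sx ^ 2 = x := Real.sq_sqrt hx0.le
    have hsy2 : sy ^ 2 = y := Real.sq_sqrt hy0.le
    have hsxne : sx ≠ 0 := ne_of_gt hsx0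
    have hsyne : sy ≠ 0 := ne_of_gt hsy0
    have e1 : sy + 1 / sy = (y + 1) / sy := by
      rw [← hsy2]; field_simp
    have e2 : sx + 1 / sx = (x + 1) / sx := by
      rw [← hsx2]; field_simp
    set E : ℝ := Real.sqrt ((y + 1) * x / (y * (x + 1))) * (sy + 1 / sy) / (sx + 1 / sx)
      with hE
    have hEpos : 0 < E := by
      have hs : 0 < Real.sqrt ((y + 1) * x / (y * (x + 1))) := Real.sqrt_pos.2 (by positivity)
      have h1 : 0 < sy + 1 / sy := by positivity
      have h2 : 0 < sx + 1 / sx := by positivity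
      positivity
    have hE2 : 1 < E ^ 2 := by
      have heq : E ^ 2 = (y + 1) ^ 3 * x ^ 2 / ((x + 1) ^ 3 * y ^ 2) := by
        rw [hE, e1, e2, div_pow, mul_pow, Real.sq_sqrt hA, div_pow, div_pow, hsy2, hsx2]
        field_simp
      rw [heq]; exact hQ
    nlinarith [hEpos, hE2]
end
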